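/- arXiv:cond-mat/0303625 — 2 statements merged into one kernel-verified Lean document; each statement's English description precedes it below -/
import Mathlib

section
/- Let Ω be a set and let A and B be finite partitions of Ω such that every cell of B is contained in some cell of A, with B ≠ A and with A having at least two cells. Then every minimal factor partition C for (A, B) is incomparable to A: C ≠ A, some cell of C is not contained in any cell of A, and some cell of A is not contained in any cell of C. -/
/-- A partition of a set `Ω` (here: of the whole type `Ω`): a collection of pairwise
disjoint nonempty subsets whose union is everything. -/
def IsPartition {Ω : Type*} (A : Set (Set Ω)) : Prop :=
  (∀ a ∈ A, a.Nonempty) ∧ (∀ a ∈ A, ∀ b ∈ A, a ≠ b → a ∩ b = ∅) ∧ ⋃₀ A = Set.univ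

/-- The product of two partitions: all nonempty sets of the form `a ∩ b`. -/
def partProd {Ω : Type*} (A B : Set (Set Ω)) : Set (Set Ω) :=
  {c | c.Nonempty ∧ ∃ a ∈ A, ∃ b ∈ B, c = a ∩ b}

/-- `B` refines `A`: every cell of `B` is contained in some cell of `A`. -/
def Refines {Ω : Type*} (B A : Set (Set Ω)) : Prop :=
  ∀ b ∈ B, ∃ a ∈ A, b ⊆ a

/-- A minimal factor partition for the pair `(A, B)`: a partition `C` with `A·C = B` such
that no partition with strictly fewer cells than `C` satisfies this. -/
def IsMinimalFactor {Ω : Type*} (A B C : Set (Set Ω)) : Prop :=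
  IsPartition C ∧ partProd A C = B ∧
    ∀ D : Set (Set Ω), IsPartition D → partProd A D = B → ¬ D.ncard < C.ncard

/-!
If every cell of `A` lies in a cell of `C`, then `A·C = A ≠ B`. If every cell of `C` lies in a
cell of `A`, then `A·C = C`, so `C = B`; but merging two cells of `B` that lie in different
cells of `A` yields a partition `D` with `A·D = B` and one cell fewer, against minimality.
-/

section

variable {Ω : Type*} {A B C : Set (Set Ω)} {a a' b b₁ b₂ : Set Ω}

namespace IsPartition

lemma nonempty_of_mem (hA : IsPartition A) (ha : a ∈ A) : a.Nonempty := hA.1 a ha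

lemma disjoint (hA : IsPartition A) (ha : a ∈ A) (ha' : a' ∈ A) (h : a ≠ a') :
    Disjoint a a' :=
  Set.disjoint_iff_inter_eq_empty.mpr (hA.2.1 a ha a' ha' h)

lemma exists_mem (hA : IsPartition A) (x : Ω) : ∃ a ∈ A, x ∈ a :=
  Set.sUnion_eq_univ_iff.mp hA.2.2 x

lemma eq_of_mem_of_mem (hA : IsPartition A) (ha : a ∈ A) (ha' : a' ∈ A) {x : Ω}
    (hx : x ∈ a) (hx' : x ∈ a') : a = a' := by
  by_contra h
  exact Set.disjoint_left.mp (hA.disjoint ha ha' h) hx hx'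

end IsPartition

namespace Refines

lemma subset_of_mem_of_mem (href : Refines B A) (hA : IsPartition A) (hb : b ∈ B) (ha : a ∈ A)
    {x : Ω} (hxb : x ∈ b) (hxa : x ∈ a) : b ⊆ a := by
  obtain ⟨a', ha', hba'⟩ := href b hb
  rwa [hA.eq_of_mem_of_mem ha ha' hxa (hba' hxb)]

lemma exists_mem_subset (href : Refines B A) (hA : IsPartition A) (hB : IsPartition B)
    (ha : a ∈ A) : ∃ b ∈ B, b ⊆ a := by
  obtain ⟨x, hxa⟩ := hA.nonempty_of_mem ha
  obtain ⟨b, hb, hxb⟩ := hB.exists_mem x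
  exact ⟨b, hb, href.subset_of_mem_of_mem hA hb ha hxb hxa⟩

end Refines

lemma partProd_comm (A C : Set (Set Ω)) : partProd A C = partProd C A := by
  ext s
  constructor <;>
  · rintro ⟨hs, a, ha, c, hc, rfl⟩
    exact ⟨hs, c, hc, a, ha, Set.inter_comm _ _⟩

lemma partProd_eq_left_of_refines (hA : IsPartition A) (hC : IsPartition C)
    (href : Refines A C) : partProd A C = A := by
  ext s
  constructor
  · rintro ⟨hs, a, ha, c, hc, rfl⟩
    obtain ⟨x, hxa, hxc⟩ := hs
    rwa [Set.inter_eq_left.mpr (href.subset_of_mem_of_mem hC ha hc hxa hxc)]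
  · intro hs
    obtain ⟨c, hc, hsc⟩ := href s hs
    exact ⟨hA.nonempty_of_mem hs, s, hs, c, hc, (Set.inter_eq_left.mpr hsc).symm⟩

lemma partProd_eq_right_of_refines (hA : IsPartition A) (hC : IsPartition C)
    (href : Refines C A) : partProd A C = C := by
  rw [partProd_comm, partProd_eq_left_of_refines hC hA href]

def mergeCells (B : Set (Set Ω)) (b₁ b₂ : Set Ω) : Set (Set Ω) :=
  insert (b₁ ∪ b₂) (B \ {b₁, b₂})

lemma mem_mergeCells_of_ne (hb : b ∈ B) (h₁ : b ≠ b₁) (h₂ : b ≠ b₂) :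
    b ∈ mergeCells B b₁ b₂ :=
  Or.inr ⟨hb, by simp [h₁, h₂]⟩

lemma isPartition_mergeCells (hB : IsPartition B) (hb₁ : b₁ ∈ B) (hb₂ : b₂ ∈ B) :
    IsPartition (mergeCells B b₁ b₂) := by
  have hdisj : ∀ b ∈ B \ {b₁, b₂}, Disjoint (b₁ ∪ b₂) b := by
    rintro b ⟨hb, hne⟩
    simp only [Set.mem_insert_iff, Set.mem_singleton_iff, not_or] at hne
    exact (hB.disjoint hb₁ hb (Ne.symm hne.1)).union_left (hB.disjoint hb₂ hb (Ne.symm hne.2))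
  refine ⟨?_, ?_, ?_⟩
  · rintro d (rfl | ⟨hd, -⟩)
    · exact (hB.nonempty_of_mem hb₁).mono Set.subset_union_left
    · exact hB.nonempty_of_mem hd
  · rintro d (rfl | hd) e (rfl | he) hde
    · exact absurd rfl hde
    · exact Set.disjoint_iff_inter_eq_empty.mp (hdisj e he)
    · exact Set.disjoint_iff_inter_eq_empty.mp (hdisj d hd).symm
    · exact hB.2.1 d hd.1 e he.1 hde
  · refine Set.sUnion_eq_univ_iff.mpr fun x => ?_
    obtain ⟨b, hb, hxb⟩ := hB.exists_mem x
    by_cases h : b = b₁ ∨ b = b₂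
    · exact ⟨b₁ ∪ b₂, Or.inl rfl, by rcases h with rfl | rfl <;> simp [hxb]⟩
    · push Not at h
      exact ⟨b, mem_mergeCells_of_ne hb h.1 h.2, hxb⟩

lemma ncard_mergeCells_lt (hBfin : B.Finite) (hb₁ : b₁ ∈ B) (hb₂ : b₂ ∈ B) (hne : b₁ ≠ b₂) :
    (mergeCells B b₁ b₂).ncard < B.ncard := by
  have hsub : {b₁, b₂} ⊆ B := Set.insert_subset hb₁ (Set.singleton_subset_iff.mpr hb₂)
  have htwo : 2 ≤ B.ncard := Set.ncard_pair hne ▸ Set.ncard_le_ncard hsub hBfin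
  have hdiff : (B \ {b₁, b₂}).ncard = B.ncard - 2 := by
    rw [Set.ncard_sdiff hsub, Set.ncard_pair hne]
  have := Set.ncard_insert_le (b₁ ∪ b₂) (B \ {b₁, b₂})
  unfold mergeCells
  omega

lemma inter_union_eq_of_subset_of_disjoint {s t u : Set Ω} (hs : t ⊆ s) (hu : Disjoint s u) :
    s ∩ (t ∪ u) = t := by
  rw [Set.inter_union_distrib_left, Set.inter_eq_right.mpr hs,
    Set.disjoint_iff_inter_eq_empty.mp hu, Set.union_empty]

lemma partProd_mergeCells (hA : IsPartition A) (hB : IsPartition B) (href : Refines B A)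
    {a₁ a₂ : Set Ω} (ha₁ : a₁ ∈ A) (ha₂ : a₂ ∈ A) (hne : a₁ ≠ a₂) (hb₁ : b₁ ∈ B)
    (hb₂ : b₂ ∈ B) (hba₁ : b₁ ⊆ a₁) (hba₂ : b₂ ⊆ a₂) :
    partProd A (mergeCells B b₁ b₂) = B := by
  have hmerge₁ : a₁ ∩ (b₁ ∪ b₂) = b₁ :=
    inter_union_eq_of_subset_of_disjoint hba₁ ((hA.disjoint ha₁ ha₂ hne).mono_right hba₂)
  have hmerge₂ : a₂ ∩ (b₁ ∪ b₂) = b₂ := by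
    rw [Set.union_comm]
    exact inter_union_eq_of_subset_of_disjoint hba₂ ((hA.disjoint ha₂ ha₁ hne.symm).mono_right hba₁)
  ext s
  constructor
  · rintro ⟨hs, a, ha, d, hd, rfl⟩
    obtain ⟨x, hxa, hxd⟩ := hs
    rcases hd with rfl | ⟨hd, -⟩
    · rcases hxd with hx | hx
      · rwa [hA.eq_of_mem_of_mem ha ha₁ hxa (hba₁ hx), hmerge₁]
      · rwa [hA.eq_of_mem_of_mem ha ha₂ hxa (hba₂ hx), hmerge₂]
    · rwa [Set.inter_eq_right.mpr (href.subset_of_mem_of_mem hA hd ha hxd hxa)]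
  · intro hs
    by_cases h : s = b₁ ∨ s = b₂
    · rcases h with rfl | rfl
      · exact ⟨hB.nonempty_of_mem hs, a₁, ha₁, _, Or.inl rfl, hmerge₁.symm⟩
      · exact ⟨hB.nonempty_of_mem hs, a₂, ha₂, _, Or.inl rfl, hmerge₂.symm⟩
    · push Not at h
      obtain ⟨a, ha, hsa⟩ := href s hs
      exact ⟨hB.nonempty_of_mem hs, a, ha, s, mem_mergeCells_of_ne hs h.1 h.2,
        (Set.inter_eq_right.mpr hsa).symm⟩

lemma exists_partProd_eq_ncard_lt (hA : IsPartition A) (hB : IsPartition B) (hBfin : B.Finite)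
    (href : Refines B A) (hA2 : 2 ≤ A.ncard) :
    ∃ D, IsPartition D ∧ partProd A D = B ∧ D.ncard < B.ncard := by
  have hAfin : A.Finite := Set.finite_of_ncard_pos (by omega)
  obtain ⟨a₁, ha₁, a₂, ha₂, hne⟩ := (Set.one_lt_ncard hAfin).mp (by omega)
  obtain ⟨b₁, hb₁, hba₁⟩ := href.exists_mem_subset hA hB ha₁
  obtain ⟨b₂, hb₂, hba₂⟩ := href.exists_mem_subset hA hB ha₂
  have hbne : b₁ ≠ b₂ :=
    ((hA.disjoint ha₁ ha₂ hne).mono hba₁ hba₂).ne (hB.nonempty_of_mem hb₁).ne_empty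
  exact ⟨mergeCells B b₁ b₂, isPartition_mergeCells hB hb₁ hb₂,
    partProd_mergeCells hA hB href ha₁ ha₂ hne hb₁ hb₂ hba₁ hba₂,
    ncard_mergeCells_lt hBfin hb₁ hb₂ hbne⟩

end

theorem minimal_factor_incomparable_general {Ω : Type*} (A B : Set (Set Ω))
    (hA : IsPartition A) (hB : IsPartition B) (hBfin : B.Finite)
    (href : Refines B A) (hne : B ≠ A) (hA2 : 2 ≤ A.ncard)
    (C : Set (Set Ω)) (hC : IsMinimalFactor A B C) :
    C ≠ A ∧ (∃ c ∈ C, ∀ a ∈ A, ¬ c ⊆ a) ∧ (∃ a ∈ A, ∀ c ∈ C, ¬ a ⊆ c) := by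
  obtain ⟨hCpart, hprod, hmin⟩ := hC
  have hnot_coarser : ∃ a ∈ A, ∀ c ∈ C, ¬ a ⊆ c := by
    by_contra! h
    exact hne (hprod ▸ partProd_eq_left_of_refines hA hCpart h)
  have hnot_finer : ∃ c ∈ C, ∀ a ∈ A, ¬ c ⊆ a := by
    by_contra! h
    have hCB : C = B := (partProd_eq_right_of_refines hA hCpart h).symm.trans hprod
    obtain ⟨D, hD, hDprod, hDcard⟩ := exists_partProd_eq_ncard_lt hA hB hBfin href hA2
    exact hmin D hD hDprod (hCB ▸ hDcard)
  refine ⟨?_, hnot_finer, hnot_coarser⟩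
  rintro rfl
  obtain ⟨c, hc, hnot⟩ := hnot_finer
  exact hnot c hc subset_rfl

/-- if `B` is a finite proper refinement of the finite partition `A`, which has
at least two cells, then every minimal factor partition `C` for `(A, B)` is incomparable to
`A`: `C ≠ A`, some cell of `C` is contained in no cell of `A`, and some cell of `A` is
contained in no cell of `C`. -/
theorem minimal_factor_incomparable {Ω : Type*} (A B : Set (Set Ω))
    (hA : IsPartition A) (hB : IsPartition B) (hAfin : A.Finite) (hBfin : B.Finite)
    (href : Refines B A) (hne : B ≠ A) (hA2 : 2 ≤ A.ncard)
    (C : Set (Set Ω)) (hC : IsMinimalFactor A B C) :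
    C ≠ A ∧ (∃ c ∈ C, ∀ a ∈ A, ¬ c ⊆ a) ∧ (∃ a ∈ A, ∀ c ∈ C, ¬ a ⊆ c) :=
  minimal_factor_incomparable_general A B hA hB hBfin href hne hA2 C hC
end

section
/- Let P : Ω → 𝒫 and F : Ω → ℱ be random variables on a finite probability space (Ω, ℙ), with 𝒫 and ℱ finite, and assume ℙ(P = p) > 0 for every p ∈ 𝒫. If η : 𝒫 → 𝒮 (𝒮 finite) is prescient, i.e., I[F; η∘P] = I[F; P], then η refines the causal-state partition of 𝒫: for all p, p' ∈ 𝒫, η(p) = η(p') implies that p and p' are causally equivalent. -/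
/-!
Since `I[F;Y] = H[F] - H[F|Y]`, prescience says `H[F | η∘P] = H[F | P]`. Write
`H[F|Y] = ∑ y, ℙ(Y = y) ∑ f, negMulLog ℙ(F = f | Y = y)`. On the fibre `η p = s`, the law of `F`
given `η∘P = s` is the mixture of the laws given `P = p`, with weights `ℙ(P = p) / ℙ(η∘P = s)`,
so by Jensen for the strictly concave `negMulLog` the fibre contributes at least as much to
`H[F | η∘P]` as to `H[F | P]`, with equality only if all the conditional laws on the fibre agree.
Equality of the totals forces equality on every fibre.
-/

open scoped BigOperators
attribute [local instance] Classical.propDecidable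

/-- Probability of an event on a finite probability space given by a weight function. -/
noncomputable def prb {Ω : Type*} [Fintype Ω] (μ : Ω → ℝ) (E : Set Ω) : ℝ :=
  ∑ ω, if ω ∈ E then μ ω else 0

/-- The distribution of a random variable `X`. -/
noncomputable def pdist {Ω α : Type*} [Fintype Ω] (μ : Ω → ℝ) (X : Ω → α) (x : α) : ℝ :=
  prb μ {ω | X ω = x}

/-- Shannon entropy `H[X]` (in nats; `Real.log 0 = 0` gives the convention `0·log 0 = 0`). -/
noncomputable def Hent {Ω α : Type*} [Fintype Ω] [Fintype α] (μ : Ω → ℝ) (X : Ω → α) : ℝ :=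
  -∑ x, pdist μ X x * Real.log (pdist μ X x)

/-- Mutual information `I[X;Y] = H[X] + H[Y] - H[X,Y]`. -/
noncomputable def Iinfo {Ω α β : Type*} [Fintype Ω] [Fintype α] [Fintype β]
    (μ : Ω → ℝ) (X : Ω → α) (Y : Ω → β) : ℝ :=
  Hent μ X + Hent μ Y - Hent μ (fun ω => (X ω, Y ω))

/-- Conditional entropy `H[X|Y] = H[X,Y] - H[Y]`. -/
noncomputable def condH {Ω α β : Type*} [Fintype Ω] [Fintype α] [Fintype β]
    (μ : Ω → ℝ) (X : Ω → α) (Y : Ω → β) : ℝ :=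
  Hent μ (fun ω => (X ω, Y ω)) - Hent μ Y

/-- Conditional probability `ℙ(E | F)`. -/
noncomputable def cprob {Ω : Type*} [Fintype Ω] (μ : Ω → ℝ) (E F : Set Ω) : ℝ :=
  prb μ (E ∩ F) / prb μ F

/-- Causal equivalence of pasts: `p ∼ p'` iff they give the same conditional
distribution over futures. -/
def CausalEquiv {Ω Pst Fut : Type*} [Fintype Ω] (μ : Ω → ℝ)
    (P : Ω → Pst) (F : Ω → Fut) (p p' : Pst) : Prop :=
  ∀ f : Fut, cprob μ {ω | F ω = f} {ω | P ω = p} = cprob μ {ω | F ω = f} {ω | P ω = p'}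

/-- Causal equivalence as a setoid on the space of pasts. -/
def causalSetoid {Ω Pst Fut : Type*} [Fintype Ω] (μ : Ω → ℝ)
    (P : Ω → Pst) (F : Ω → Fut) : Setoid Pst where
  r := CausalEquiv μ P F
  iseqv := ⟨fun _ _ => rfl, fun h f => (h f).symm, fun h h' f => (h f).trans (h' f)⟩

/-- The causal state map `ε` sends a past to its causal equivalence class. -/
def causalState {Ω Pst Fut : Type*} [Fintype Ω] (μ : Ω → ℝ)
    (P : Ω → Pst) (F : Ω → Fut) (p : Pst) : Quotient (causalSetoid μ P F) :=
  Quotient.mk (causalSetoid μ P F) p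

open Finset Real

section Probability

variable {Ω α β γ : Type*} [Fintype Ω] {μ : Ω → ℝ}

lemma prb_nonneg (hμ : ∀ ω, 0 ≤ μ ω) (E : Set Ω) : 0 ≤ prb μ E :=
  sum_nonneg fun ω _ => by split <;> simp [hμ ω]

lemma prb_inter_preimage_finset (E : Set Ω) (Y : Ω → β) (T : Finset β) :
    prb μ (E ∩ {ω | Y ω ∈ T}) = ∑ y ∈ T, prb μ (E ∩ {ω | Y ω = y}) := by
  unfold prb
  rw [sum_comm]
  refine sum_congr rfl fun ω _ => ?_
  by_cases hE : ω ∈ E <;> simp [hE]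

lemma pdist_comp [Fintype β] (Y : Ω → β) (g : β → γ) (s : γ) :
    pdist μ (fun ω => g (Y ω)) s = ∑ y with g y = s, pdist μ Y y := by
  simpa [pdist] using prb_inter_preimage_finset (μ := μ) Set.univ Y {y | g y = s}

lemma prb_inter_comp [Fintype β] (E : Set Ω) (Y : Ω → β) (g : β → γ) (s : γ) :
    prb μ (E ∩ {ω | g (Y ω) = s}) = ∑ y with g y = s, prb μ (E ∩ {ω | Y ω = y}) := by
  simpa using prb_inter_preimage_finset (μ := μ) E Y {y | g y = s}

lemma sum_prb_inter [Fintype α] (X : Ω → α) (E : Set Ω) :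
    ∑ x, prb μ ({ω | X ω = x} ∩ E) = prb μ E := by
  simpa [Set.inter_comm] using (prb_inter_preimage_finset (μ := μ) E X univ).symm

lemma cprob_nonneg (hμ : ∀ ω, 0 ≤ μ ω) (E F : Set Ω) : 0 ≤ cprob μ E F :=
  div_nonneg (prb_nonneg hμ _) (prb_nonneg hμ _)

end Probability

section Entropy

variable {Ω α β : Type*} [Fintype Ω] [Fintype α] [Fintype β]

lemma Hent_eq_sum_negMulLog (μ : Ω → ℝ) (X : Ω → α) :
    Hent μ X = ∑ x, negMulLog (pdist μ X x) := by
  simp [Hent, negMulLog, sum_neg_distrib]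

lemma Iinfo_eq_Hent_sub_condH (μ : Ω → ℝ) (X : Ω → α) (Y : Ω → β) :
    Iinfo μ X Y = Hent μ X - condH μ X Y := by
  rw [Iinfo, condH]; ring

lemma sum_negMulLog_eq_negMulLog_sum_add {ι : Type*} (t : Finset ι) {r : ι → ℝ}
    (hr : ∀ i ∈ t, 0 ≤ r i) :
    ∑ i ∈ t, negMulLog (r i)
      = negMulLog (∑ i ∈ t, r i) + (∑ i ∈ t, r i) * ∑ i ∈ t, negMulLog (r i / ∑ j ∈ t, r j) := by
  set q := ∑ i ∈ t, r i
  rcases eq_or_ne q 0 with hq | hq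
  · have hr0 : ∀ i ∈ t, r i = 0 := (sum_eq_zero_iff_of_nonneg hr).mp hq
    simp [hq, sum_eq_zero fun i hi => show negMulLog (r i) = 0 by rw [hr0 i hi, negMulLog_zero]]
  · calc ∑ i ∈ t, negMulLog (r i) = ∑ i ∈ t, negMulLog (q * (r i / q)) := by
          simp only [mul_div_cancel₀ _ hq]
      _ = negMulLog q + q * ∑ i ∈ t, negMulLog (r i / q) := by
          simp only [negMulLog_mul, sum_add_distrib, ← sum_mul, ← mul_sum, ← sum_div]
          rw [show (∑ i ∈ t, r i) / q = 1 from div_self hq, one_mul]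

lemma condH_eq_sum_mul_sum_negMulLog_cprob {μ : Ω → ℝ} (hμ : ∀ ω, 0 ≤ μ ω)
    (X : Ω → α) (Y : Ω → β) :
    condH μ X Y = ∑ y, pdist μ Y y * ∑ x, negMulLog (cprob μ {ω | X ω = x} {ω | Y ω = y}) := by
  have hjoint : Hent μ (fun ω => (X ω, Y ω))
      = ∑ y, ∑ x, negMulLog (prb μ ({ω | X ω = x} ∩ {ω | Y ω = y})) := by
    rw [Hent_eq_sum_negMulLog, Fintype.sum_prod_type, sum_comm]
    simp only [pdist, Prod.mk.injEq, Set.ofPred_and]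
  have hchain (y : β) : ∑ x, negMulLog (prb μ ({ω | X ω = x} ∩ {ω | Y ω = y}))
      = negMulLog (pdist μ Y y)
        + pdist μ Y y * ∑ x, negMulLog (cprob μ {ω | X ω = x} {ω | Y ω = y}) := by
    rw [sum_negMulLog_eq_negMulLog_sum_add _ fun x _ => prb_nonneg hμ _, sum_prb_inter]
    rfl
  rw [condH, hjoint, Hent_eq_sum_negMulLog, sum_congr rfl fun y _ => hchain y, sum_add_distrib]
  ring

end Entropy

section Jensen

variable {ι : Type*} {t : Finset ι} {q c : ι → ℝ}

lemma sum_mul_negMulLog_le (hq : ∀ i ∈ t, 0 < q i) (hc : ∀ i ∈ t, 0 ≤ c i) :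
    ∑ i ∈ t, q i * negMulLog (c i)
      ≤ (∑ i ∈ t, q i) * negMulLog ((∑ i ∈ t, q i * c i) / ∑ i ∈ t, q i) := by
  rcases t.eq_empty_or_nonempty with rfl | ht
  · simp
  have hQ : 0 < ∑ i ∈ t, q i := sum_pos hq ht
  have hJ := concaveOn_negMulLog.le_map_centerMass (fun i hi => (hq i hi).le) hQ hc
  simp only [centerMass, Function.comp_apply, smul_eq_mul] at hJ
  rw [inv_mul_eq_div, div_le_iff₀' hQ, inv_mul_eq_div] at hJ
  exact hJ

lemma eq_of_sum_mul_negMulLog_eq (hq : ∀ i ∈ t, 0 < q i) (hc : ∀ i ∈ t, 0 ≤ c i)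
    (heq : ∑ i ∈ t, q i * negMulLog (c i)
      = (∑ i ∈ t, q i) * negMulLog ((∑ i ∈ t, q i * c i) / ∑ i ∈ t, q i)) :
    ∀ ⦃i⦄, i ∈ t → ∀ ⦃j⦄, j ∈ t → c i = c j := by
  rcases t.eq_empty_or_nonempty with rfl | ht
  · simp
  have hQ : 0 < ∑ i ∈ t, q i := sum_pos hq ht
  refine strictConcaveOn_negMulLog.eq_of_map_sum_eq (w := fun i => q i / ∑ j ∈ t, q j)
    (fun i hi => div_pos (hq i hi) hQ) (by rw [← sum_div, div_self hQ.ne']) hc ?_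
  simp only [smul_eq_mul, div_mul_eq_mul_div, ← sum_div]
  rw [heq, mul_div_cancel_left₀ _ hQ.ne']

end Jensen

section DataProcessing

variable {Ω α β γ : Type*} [Fintype Ω] [Fintype α] [Fintype β] {μ : Ω → ℝ}

lemma cprob_comp_eq {Y : Ω → β} (hY : ∀ y, 0 < pdist μ Y y) (E : Set Ω) (g : β → γ) (s : γ) :
    cprob μ E {ω | g (Y ω) = s}
      = (∑ y with g y = s, pdist μ Y y * cprob μ E {ω | Y ω = y})
        / ∑ y with g y = s, pdist μ Y y := by
  rw [cprob, prb_inter_comp, ← pdist_comp]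
  congr 1
  exact sum_congr rfl fun y _ => (mul_div_cancel₀ _ (hY y).ne').symm

theorem cprob_eq_of_condH_comp_eq [Fintype γ] (hμ : ∀ ω, 0 ≤ μ ω) {X : Ω → α} {Y : Ω → β}
    (hY : ∀ y, 0 < pdist μ Y y) {g : β → γ}
    (h : condH μ X (fun ω => g (Y ω)) = condH μ X Y) {y y' : β} (hyy' : g y = g y') (x : α) :
    cprob μ {ω | X ω = x} {ω | Y ω = y} = cprob μ {ω | X ω = x} {ω | Y ω = y'} := by
  set c : α → β → ℝ := fun x y => cprob μ {ω | X ω = x} {ω | Y ω = y}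
  set A : γ → α → ℝ := fun s x => ∑ y with g y = s, pdist μ Y y * negMulLog (c x y)
  set B : γ → α → ℝ := fun s x =>
    pdist μ (fun ω => g (Y ω)) s * negMulLog (cprob μ {ω | X ω = x} {ω | g (Y ω) = s})
  have hA : condH μ X Y = ∑ s, ∑ x, A s x := by
    rw [condH_eq_sum_mul_sum_negMulLog_cprob hμ, ← sum_fiberwise univ g]
    simp only [A, mul_sum]
    exact sum_congr rfl fun s _ => sum_comm
  have hB : condH μ X (fun ω => g (Y ω)) = ∑ s, ∑ x, B s x := by
    simp only [condH_eq_sum_mul_sum_negMulLog_cprob hμ, B, mul_sum]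
  have hAB : ∀ s x, A s x ≤ B s x := fun s x => by
    simp only [A, B, pdist_comp, cprob_comp_eq hY]
    exact sum_mul_negMulLog_le (fun y _ => hY y) (fun y _ => cprob_nonneg hμ _ _)
  have hABeq : A (g y) x = B (g y) x := by
    rw [hA, hB] at h
    have hrow := (sum_eq_sum_iff_of_le fun s _ => sum_le_sum fun x _ => hAB s x).mp h.symm
      (g y) (mem_univ _)
    exact (sum_eq_sum_iff_of_le fun x _ => hAB (g y) x).mp hrow x (mem_univ _)
  simp only [A, B, pdist_comp, cprob_comp_eq hY] at hABeq
  exact eq_of_sum_mul_negMulLog_eq (fun y _ => hY y) (fun y _ => cprob_nonneg hμ _ _) hABeq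
    (by simp) (by simp [hyy'])

end DataProcessing

theorem prescient_refines_causal_states_general {Ω Pst Fut S : Type*}
    [Fintype Ω] [Fintype Pst] [Fintype Fut] [Fintype S]
    (μ : Ω → ℝ) (hμ0 : ∀ ω, 0 ≤ μ ω)
    (P : Ω → Pst) (F : Ω → Fut)
    (hP : ∀ p : Pst, 0 < prb μ {ω | P ω = p})
    (η : Pst → S) (hpres : Iinfo μ F (fun ω => η (P ω)) = Iinfo μ F P) :
    ∀ p p' : Pst, η p = η p' → CausalEquiv μ P F p p' := by
  intro p p' hη f
  have hcondH : condH μ F (fun ω => η (P ω)) = condH μ F P := by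
    simpa [Iinfo_eq_Hent_sub_condH] using hpres
  exact cprob_eq_of_condH_comp_eq hμ0 hP hcondH hη f

/-- any prescient partition of the pasts refines the causal states:
if `I[F; η∘P] = I[F; P]` then histories identified by `η` are causally equivalent. -/
theorem prescient_refines_causal_states {Ω Pst Fut S : Type*}
    [Fintype Ω] [Fintype Pst] [Fintype Fut] [Fintype S]
    (μ : Ω → ℝ) (hμ0 : ∀ ω, 0 ≤ μ ω) (hμ1 : ∑ ω, μ ω = 1)
    (P : Ω → Pst) (F : Ω → Fut)
    (hP : ∀ p : Pst, 0 < prb μ {ω | P ω = p})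
    (η : Pst → S) (hpres : Iinfo μ F (fun ω => η (P ω)) = Iinfo μ F P) :
    ∀ p p' : Pst, η p = η p' → CausalEquiv μ P F p p' :=
  prescient_refines_causal_states_general μ hμ0 P F hP η hpres
end
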